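/- For every r > 0 and every integer k with 1 ≤ k ≤ d − 1, the Kolmogorov k-width of the localized ellipse centered at 0 satisfies W_k(E ∩ B(r)) = min{ √(μ_{k+1}), r }; moreover W_d(E ∩ B(r)) = 0. The minimum in the definition of W_k is achieved by the orthogonal projection onto span{e₁, …, e_k}. -/

import Mathlib

open MeasureTheory ProbabilityTheory Metric Set Filter
open scoped BigOperators ENNReal NNReal RealInnerProductSpace Classical

noncomputable section

namespace GaussKol

/-- The standard Gaussian measure on `EuclideanSpace ℝ (Fin d)`. -/
def stdGaussian (d : ℕ) : Measure (EuclideanSpace ℝ (Fin d)) :=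
  (Measure.pi fun _ : Fin d => gaussianReal 0 1).map
    (MeasurableEquiv.toLp 2 (Fin d → ℝ))

/-- The Gaussian width of a set `S ⊆ ℝ^d`. -/
def gaussianWidth {d : ℕ} (S : Set (EuclideanSpace ℝ (Fin d))) : ℝ :=
  ∫ w, (⨆ u ∈ S, ⟪w, u⟫) ∂(stdGaussian d)

/-- The ellipse with aspect ratios `μ`. -/
def ellipse {d : ℕ} (μ : Fin d → ℝ) : Set (EuclideanSpace ℝ (Fin d)) :=
  {θ | ∑ j, θ j ^ 2 / μ j ≤ 1}

/-- The squared elliptical norm. -/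
def enormSq {d : ℕ} (μ : Fin d → ℝ) (θ : EuclideanSpace ℝ (Fin d)) : ℝ :=
  ∑ j, θ j ^ 2 / μ j

/-- The recentered ellipse `E_{θ*}`. -/
def shiftedEllipse {d : ℕ} (μ : Fin d → ℝ) (θs : EuclideanSpace ℝ (Fin d)) :
    Set (EuclideanSpace ℝ (Fin d)) :=
  (fun θ => θ - θs) '' ellipse μ

/-- Orthogonal projection onto a subspace, as a self-map of `ℝ^d`. -/
def projK {d : ℕ} (K : Submodule ℝ (EuclideanSpace ℝ (Fin d)))
    (x : EuclideanSpace ℝ (Fin d)) : EuclideanSpace ℝ (Fin d) :=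
  (K.orthogonalProjectionOnto x : EuclideanSpace ℝ (Fin d))

/-- The Kolmogorov `k`-width of a set `S ⊆ ℝ^d`. -/
def kolWidth {d : ℕ} (k : ℕ) (S : Set (EuclideanSpace ℝ (Fin d))) : ℝ :=
  ⨅ K : {K : Submodule ℝ (EuclideanSpace ℝ (Fin d)) // Module.finrank ℝ K = k},
    ⨆ θ ∈ S, ‖θ - projK K.1 θ‖

/-- The critical dimension `k(θ*, δ)`. -/
def critDim {d : ℕ} (η : ℝ) (μ : Fin d → ℝ) (θs : EuclideanSpace ℝ (Fin d)) (δ : ℝ) : ℕ :=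
  sInf {k : ℕ | 1 ≤ k ∧ k ≤ d ∧
    kolWidth k (shiftedEllipse μ θs ∩ closedBall 0 ((1 - η) * δ)) ≤ (9 / 10) * δ}

/-- The set `Γ(θ*, δ, Π_k)`. -/
def Gam {d : ℕ} (μ : Fin d → ℝ) (θs : EuclideanSpace ℝ (Fin d)) (δ : ℝ)
    (K : Submodule ℝ (EuclideanSpace ℝ (Fin d))) : Set (Fin d → ℝ) :=
  {γ | (∀ i, 0 < γ i) ∧
    ∀ Δ ∈ shiftedEllipse μ θs ∩ closedBall 0 δ,
      ∑ i, (Δ i - projK K Δ i) ^ 2 / γ i ≤ 1}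

/-- The function `Φ`. -/
def Phi {d : ℕ} (η : ℝ) (μ : Fin d → ℝ) (θs : EuclideanSpace ℝ (Fin d)) (δ : ℝ) : ℝ :=
  if ‖θs‖ / (1 - η) < δ then 1
  else min 1 (sInf {r : ℝ | 0 ≤ r ∧
    δ ^ 2 ≤ ((1 - η) ^ 2)⁻¹ * ∑ i, r ^ 2 * θs i ^ 2 / (r + μ i) ^ 2})

/-- `Φ⁻¹(x)`: the largest `δ > 0` with `Φ(δ) ≤ x` (equal to `∞` when unbounded). -/
def PhiInv {d : ℕ} (η : ℝ) (μ : Fin d → ℝ) (θs : EuclideanSpace ℝ (Fin d)) (x : ℝ) : ℝ≥0∞ :=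
  ⨆ (δ : ℝ) (_ : 0 < δ ∧ Phi η μ θs δ ≤ x), ENNReal.ofReal δ

/-- The `ε`-packing number of `S` in Euclidean distance. -/
def packingNumber {d : ℕ} (ε : ℝ) (S : Set (EuclideanSpace ℝ (Fin d))) : ℕ :=
  sSup {n : ℕ | ∃ T : Finset (EuclideanSpace ℝ (Fin d)),
    ↑T ⊆ S ∧ (∀ x ∈ T, ∀ y ∈ T, x ≠ y → ε < dist x y) ∧ T.card = n}

/-- Regularity of the ellipse at `θ*`, with explicit constant `c`. -/
def regularAtWith {d : ℕ} (η : ℝ) (μ : Fin d → ℝ) (θs : EuclideanSpace ℝ (Fin d))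
    (c : ℝ) : Prop :=
  ∀ δ : ℝ, 0 < δ →
    ∃ K : Submodule ℝ (EuclideanSpace ℝ (Fin d)),
      Module.finrank ℝ K = critDim η μ θs δ ∧
      (⨆ θ ∈ shiftedEllipse μ θs ∩ closedBall 0 ((1 - η) * δ), ‖θ - projK K θ‖)
        ≤ kolWidth (critDim η μ θs δ) (shiftedEllipse μ θs ∩ closedBall 0 ((1 - η) * δ)) ∧
      sInf ((fun γ : Fin d → ℝ => ∑ i, γ i) '' Gam μ θs δ K)
        ≤ c * δ ^ 2 * critDim η μ θs δ

/-- The minimax risk of estimation over the ellipse with noise level `σ`. -/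
def minimaxRisk (d : ℕ) (μ : Fin d → ℝ) (σ : ℝ) : ℝ :=
  ⨅ est : {f : EuclideanSpace ℝ (Fin d) → EuclideanSpace ℝ (Fin d) // Measurable f},
    ⨆ θs ∈ ellipse μ, ∫ w, ‖est.1 (θs + σ • w) - θs‖ ^ 2 ∂(stdGaussian d)

end GaussKol

open GaussKol

/-! Projecting onto `span {e₁, …, e_k}` leaves the tail `(θ_j)_{j > k}`, whose squared norm is at
most `μ_{k+1} ‖θ‖_E² ≤ μ_{k+1}` and at most `‖θ‖² ≤ r²`. Conversely, any `k`-dimensional `K` has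
`Kᗮ` meeting the `(k+1)`-dimensional `span {e₁, …, e_{k+1}}` nontrivially; the vector of length
`min {√μ_{k+1}, r}` there lies in `E ∩ B(r)` and is orthogonal to `K`, so it is not approximated
at all. Indices are 0-based in the code: `μ_{k+1}` is `μ ⟨k, _⟩`. -/

namespace GaussKol

section CoordSpan

variable {ι : Type*} [Fintype ι] [DecidableEq ι]

def coordSpan (s : Set ι) : Submodule ℝ (EuclideanSpace ℝ ι) :=
  Submodule.span ℝ ((fun j => EuclideanSpace.single j (1 : ℝ)) '' s)

lemma coordSpan_eq_span_basisFun (s : Set ι) :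
    coordSpan s = Submodule.span ℝ ((EuclideanSpace.basisFun ι ℝ).toBasis '' s) := by
  ext
  simp only [coordSpan, OrthonormalBasis.coe_toBasis, EuclideanSpace.basisFun_apply]

lemma mem_coordSpan_iff {s : Set ι} {x : EuclideanSpace ℝ ι} :
    x ∈ coordSpan s ↔ ∀ j ∉ s, x j = 0 := by
  rw [coordSpan_eq_span_basisFun, Module.Basis.mem_span_image]
  simp [Set.subset_def, not_imp_comm]

lemma finrank_coordSpan (s : Set ι) : Module.finrank ℝ (coordSpan s) = s.ncard := by
  rw [coordSpan_eq_span_basisFun, finrank_span_set_eq_card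
    ((EuclideanSpace.basisFun ι ℝ).toBasis.linearIndependent.linearIndepOn _ |>.id_image),
    Set.toFinset_card, Fintype.card_eq_nat_card, Nat.card_coe_set_eq]
  exact Set.ncard_image_of_injective s (EuclideanSpace.basisFun ι ℝ).toBasis.injective

end CoordSpan

lemma finrank_coordSpan_val_lt {d k : ℕ} (hk : k ≤ d) :
    Module.finrank ℝ (coordSpan {j : Fin d | (j : ℕ) < k}) = k := by
  rw [finrank_coordSpan, ← Fin.range_castLE hk,
    Set.ncard_range_of_injective (Fin.castLE_injective hk), Nat.card_eq_fintype_card,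
    Fintype.card_fin]

section Projection

variable {d : ℕ} {K : Submodule ℝ (EuclideanSpace ℝ (Fin d))}

lemma norm_sub_projK_le_of_mem (x : EuclideanSpace ℝ (Fin d)) {v : EuclideanSpace ℝ (Fin d)}
    (hv : v ∈ K) : ‖x - projK K x‖ ≤ ‖x - v‖ := by
  rw [projK, ← Submodule.starProjection_apply, Submodule.starProjection_minimal]
  exact ciInf_le ⟨0, by rintro b ⟨w, rfl⟩; positivity⟩ (⟨v, hv⟩ : K)

lemma norm_sub_projK_le (x : EuclideanSpace ℝ (Fin d)) : ‖x - projK K x‖ ≤ ‖x‖ := by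
  simpa using norm_sub_projK_le_of_mem x K.zero_mem

lemma projK_eq_zero_of_mem_orthogonal {x : EuclideanSpace ℝ (Fin d)} (hx : x ∈ Kᗮ) :
    projK K x = 0 := by
  simp [projK, Submodule.orthogonalProjectionOnto_apply_of_mem_orthogonal hx]

lemma projK_top (x : EuclideanSpace ℝ (Fin d)) : projK ⊤ x = x := by
  simp [projK, Submodule.starProjection_top]

end Projection

section ProjError

variable {d : ℕ} {K : Submodule ℝ (EuclideanSpace ℝ (Fin d))} {S : Set (EuclideanSpace ℝ (Fin d))}

def projError (K : Submodule ℝ (EuclideanSpace ℝ (Fin d))) (S : Set (EuclideanSpace ℝ (Fin d))) :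
    ℝ :=
  ⨆ θ ∈ S, ‖θ - projK K θ‖

lemma projError_nonneg : 0 ≤ projError K S :=
  Real.iSup_nonneg fun _ => Real.iSup_nonneg fun _ => norm_nonneg _

lemma projError_le {c : ℝ} (hc : 0 ≤ c) (h : ∀ θ ∈ S, ‖θ - projK K θ‖ ≤ c) :
    projError K S ≤ c :=
  Real.iSup_le (fun θ => Real.iSup_le (h θ) hc) hc

lemma le_projError {R : ℝ} (hS : S ⊆ closedBall 0 R) {θ : EuclideanSpace ℝ (Fin d)}
    (hθ : θ ∈ S) : ‖θ - projK K θ‖ ≤ projError K S := by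
  refine le_ciSup₂ (f := fun θ (_ : θ ∈ S) => ‖θ - projK K θ‖) ⟨R, ?_⟩ θ hθ
  simp only [upperBounds, mem_iUnion, mem_range, mem_ofPred_eq]
  rintro _ ⟨θ', hθ', rfl⟩
  exact (norm_sub_projK_le θ').trans (mem_closedBall_zero_iff.mp (hS hθ'))

lemma projError_top : projError ⊤ S = 0 := by
  simp [projError, projK_top]

lemma kolWidth_eq_projError {k : ℕ} {K₀ : Submodule ℝ (EuclideanSpace ℝ (Fin d))}
    (hK₀ : Module.finrank ℝ K₀ = k)
    (hmin : ∀ K : Submodule ℝ (EuclideanSpace ℝ (Fin d)), Module.finrank ℝ K = k →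
      projError K₀ S ≤ projError K S) :
    kolWidth k S = projError K₀ S := by
  have : Nonempty {K : Submodule ℝ (EuclideanSpace ℝ (Fin d)) // Module.finrank ℝ K = k} :=
    ⟨⟨K₀, hK₀⟩⟩
  change ⨅ K : {K : Submodule ℝ (EuclideanSpace ℝ (Fin d)) // Module.finrank ℝ K = k},
    projError K.1 S = _
  refine le_antisymm ?_ (le_ciInf fun K => hmin K.1 K.2)
  have hbdd : BddBelow (range fun K : {K : Submodule ℝ (EuclideanSpace ℝ (Fin d)) //
      Module.finrank ℝ K = k} => projError K.1 S) := by
    refine ⟨0, ?_⟩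
    rintro _ ⟨K, rfl⟩
    exact projError_nonneg
  exact ciInf_le hbdd ⟨K₀, hK₀⟩

end ProjError

lemma exists_mem_inf_orthogonal_norm_eq {E : Type*} [NormedAddCommGroup E]
    [InnerProductSpace ℝ E] [FiniteDimensional ℝ E] {K V : Submodule ℝ E}
    (hKV : Module.finrank ℝ K < Module.finrank ℝ V) {c : ℝ} (hc : 0 ≤ c) :
    ∃ θ ∈ V ⊓ Kᗮ, ‖θ‖ = c := by
  have hne : V ⊓ Kᗮ ≠ ⊥ := by
    intro hbot
    have hsum := Submodule.finrank_sup_add_finrank_inf_eq V Kᗮ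
    have horth := K.finrank_add_finrank_orthogonal
    have hsup := Submodule.finrank_le (V ⊔ Kᗮ)
    rw [hbot, finrank_bot] at hsum
    omega
  obtain ⟨v, hv, hv0⟩ := Submodule.exists_mem_ne_zero_of_ne_bot hne
  refine ⟨(c * ‖v‖⁻¹) • v, Submodule.smul_mem _ _ hv, ?_⟩
  rw [norm_smul, Real.norm_of_nonneg (by positivity),
    inv_mul_cancel_right₀ (norm_ne_zero_iff.mpr hv0)]

section Ellipse

variable {d : ℕ} {μ : Fin d → ℝ} {θ : EuclideanSpace ℝ (Fin d)}

lemma sum_sq_le_of_mem_ellipse (hμpos : ∀ i, 0 < μ i) (hθ : θ ∈ ellipse μ) {t : Finset (Fin d)}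
    {m : ℝ} (hm : 0 ≤ m) (ht : ∀ j ∈ t, μ j ≤ m) : ∑ j ∈ t, θ j ^ 2 ≤ m :=
  calc ∑ j ∈ t, θ j ^ 2 = ∑ j ∈ t, μ j * (θ j ^ 2 / μ j) := by
        refine Finset.sum_congr rfl fun j _ => ?_
        rw [mul_div_cancel₀ _ (hμpos j).ne']
    _ ≤ ∑ j ∈ t, m * (θ j ^ 2 / μ j) := by
        gcongr with j hj
        · exact div_nonneg (sq_nonneg _) (hμpos j).le
        · exact ht j hj
    _ = m * ∑ j ∈ t, θ j ^ 2 / μ j := by rw [Finset.mul_sum]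
    _ ≤ m * ∑ j, θ j ^ 2 / μ j := by
        gcongr
        · exact fun j _ _ => div_nonneg (sq_nonneg _) (hμpos j).le
        · exact t.subset_univ
    _ ≤ m := mul_le_of_le_one_right hm hθ

lemma mem_ellipse_of_norm_sq_le (h : ∀ j, θ j ≠ 0 → ‖θ‖ ^ 2 ≤ μ j) : θ ∈ ellipse μ := by
  rcases eq_or_ne θ 0 with rfl | hθ0
  · simp [ellipse]
  have hθ2 : 0 < ‖θ‖ ^ 2 := by positivity
  calc ∑ j, θ j ^ 2 / μ j ≤ ∑ j, θ j ^ 2 / ‖θ‖ ^ 2 := by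
        refine Finset.sum_le_sum fun j _ => ?_
        rcases eq_or_ne (θ j) 0 with hj | hj
        · simp [hj]
        · exact div_le_div_of_nonneg_left (sq_nonneg _) hθ2 (h j hj)
    _ = 1 := by
        rw [← Finset.sum_div, ← EuclideanSpace.real_norm_sq_eq, div_self hθ2.ne']

lemma norm_sub_projK_coordSpan_sq_le (s : Set (Fin d)) (θ : EuclideanSpace ℝ (Fin d)) :
    ‖θ - projK (coordSpan s) θ‖ ^ 2 ≤ ∑ j with j ∉ s, θ j ^ 2 := by
  set y : EuclideanSpace ℝ (Fin d) := WithLp.toLp 2 fun j => if j ∈ s then θ j else 0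
  have hy : y ∈ coordSpan s := mem_coordSpan_iff.mpr fun j hj => by simp [y, hj]
  calc ‖θ - projK (coordSpan s) θ‖ ^ 2 ≤ ‖θ - y‖ ^ 2 := by
        gcongr
        exact norm_sub_projK_le_of_mem θ hy
    _ = ∑ j with j ∉ s, θ j ^ 2 := by
        rw [EuclideanSpace.real_norm_sq_eq, Finset.sum_filter]
        refine Finset.sum_congr rfl fun j _ => ?_
        by_cases hj : j ∈ s <;> simp [y, hj]

lemma projError_ellipse_coordSpan_le (hμpos : ∀ i, 0 < μ i)
    (hμmono : ∀ i j : Fin d, i ≤ j → μ j ≤ μ i) {k : ℕ} (hk : k < d) {r : ℝ} (hr : 0 ≤ r) :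
    projError (coordSpan {j : Fin d | (j : ℕ) < k}) (ellipse μ ∩ closedBall 0 r)
      ≤ min (√(μ ⟨k, hk⟩)) r := by
  refine projError_le (le_min (Real.sqrt_nonneg _) hr) fun θ ⟨hθE, hθB⟩ => ?_
  have htail := norm_sub_projK_coordSpan_sq_le {j : Fin d | (j : ℕ) < k} θ
  refine le_min ((Real.le_sqrt (norm_nonneg _) (hμpos _).le).mpr (htail.trans ?_))
    ((pow_le_pow_iff_left₀ (norm_nonneg _) hr two_ne_zero).mp (htail.trans ?_))
  · exact sum_sq_le_of_mem_ellipse hμpos hθE (hμpos _).le fun j hj =>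
      hμmono _ _ (by simpa [Fin.le_def] using hj)
  · calc _ ≤ ∑ j, θ j ^ 2 := Finset.sum_le_univ_sum_of_nonneg fun j => sq_nonneg _
      _ = ‖θ‖ ^ 2 := (EuclideanSpace.real_norm_sq_eq θ).symm
      _ ≤ r ^ 2 := by gcongr; exact mem_closedBall_zero_iff.mp hθB

lemma min_le_projError_ellipse (hμpos : ∀ i, 0 < μ i)
    (hμmono : ∀ i j : Fin d, i ≤ j → μ j ≤ μ i) {k : ℕ} (hk : k < d) {r : ℝ} (hr : 0 ≤ r)
    {K : Submodule ℝ (EuclideanSpace ℝ (Fin d))} (hK : Module.finrank ℝ K = k) :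
    min (√(μ ⟨k, hk⟩)) r ≤ projError K (ellipse μ ∩ closedBall 0 r) := by
  set c := min (√(μ ⟨k, hk⟩)) r
  have hc : 0 ≤ c := le_min (Real.sqrt_nonneg _) hr
  obtain ⟨θ, hθ, hθc⟩ := exists_mem_inf_orthogonal_norm_eq (K := K)
    (V := coordSpan {j : Fin d | (j : ℕ) < k + 1})
    (by rw [hK, finrank_coordSpan_val_lt hk]; omega) hc
  have hθE : θ ∈ ellipse μ := mem_ellipse_of_norm_sq_le fun j hj => by
    have hjk : (j : ℕ) < k + 1 := by
      by_contra h
      exact hj (mem_coordSpan_iff.mp hθ.1 j h)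
    calc ‖θ‖ ^ 2 = c ^ 2 := by rw [hθc]
      _ ≤ μ ⟨k, hk⟩ := (Real.le_sqrt hc (hμpos _).le).mp (min_le_left _ _)
      _ ≤ μ j := hμmono _ _ (Fin.le_def.mpr (by simp only; omega))
  have hθB : θ ∈ closedBall 0 r := mem_closedBall_zero_iff.mpr (hθc ▸ min_le_right _ _)
  calc c = ‖θ - projK K θ‖ := by rw [projK_eq_zero_of_mem_orthogonal hθ.2, sub_zero, hθc]
    _ ≤ projError K (ellipse μ ∩ closedBall 0 r) := le_projError inter_subset_right ⟨hθE, hθB⟩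

end Ellipse

end GaussKol

/-- **Kolmogorov width of the localized ellipse at zero.**
For `1 ≤ k ≤ d − 1`, `W_k(E ∩ B(r)) = min{√μ_{k+1}, r}`, the minimum in the definition of
`W_k` being achieved by the projection onto `span{e₁, …, e_k}`; moreover
`W_d(E ∩ B(r)) = 0`. -/
theorem kolWidth_ellipse_at_zero {d : ℕ} (μ : Fin d → ℝ)
    (hμpos : ∀ i, 0 < μ i) (hμmono : ∀ i j : Fin d, i ≤ j → μ j ≤ μ i)
    (r : ℝ) (hr : 0 < r) :
    (∀ k : ℕ, ∀ hk1 : 1 ≤ k, ∀ hk2 : k ≤ d - 1,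
      kolWidth k (ellipse μ ∩ closedBall 0 r)
          = min (Real.sqrt (μ ⟨k, by omega⟩)) r ∧
      (⨆ θ ∈ ellipse μ ∩ closedBall 0 r,
          ‖θ - projK (Submodule.span ℝ
            ((fun j : Fin d => EuclideanSpace.single j (1 : ℝ)) '' {j | (j : ℕ) < k})) θ‖)
        = kolWidth k (ellipse μ ∩ closedBall 0 r)) ∧
    kolWidth d (ellipse μ ∩ closedBall 0 r) = 0 := by
  refine ⟨fun k _ hk => ?_, ?_⟩
  · have hkd : k < d := by omega
    have hK₀ := finrank_coordSpan_val_lt (d := d) hkd.le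
    have hupper := projError_ellipse_coordSpan_le hμpos hμmono hkd hr.le
    have hlower := fun (K : Submodule ℝ (EuclideanSpace ℝ (Fin d)))
        (hK : Module.finrank ℝ K = k) =>
      min_le_projError_ellipse hμpos hμmono hkd hr.le hK
    have hkol := kolWidth_eq_projError hK₀ fun K hK => hupper.trans (hlower K hK)
    exact ⟨hkol.trans (hupper.antisymm (hlower _ hK₀)), hkol.symm⟩
  · have htop : Module.finrank ℝ (⊤ : Submodule ℝ (EuclideanSpace ℝ (Fin d))) = d := by
      rw [finrank_top, finrank_euclideanSpace_fin]
    rw [kolWidth_eq_projError htop fun K _ => projError_top.trans_le projError_nonneg,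
      projError_top]
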